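/- Let {E_{α,k}} be an informationally complete (N,M)-POVM on a d-dimensional Hilbert space with parameter x, and let {e_1,…,e_d} be an orthonormal basis. Define vectors u_{ij} ∈ ℂ^{NM} with components (u_{ij})_{(α,k)} = ⟨e_j|E_{α,k}|e_i⟩. Then the inner products satisfy ⟨u_{ij}, u_{i'j'}⟩ = ((xM²−d)/(M(M−1)))·δ_{ii'}δ_{jj'} + ((d³−xM²)/(dM(M−1)))·δ_{ij}δ_{i'j'}. -/

import Mathlib

open Matrix Kronecker BigOperators
open scoped ComplexOrder

/-- The positive semidefinite square root of a positive semidefinite matrix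
(removed from Mathlib; restored here with its old definition). -/
noncomputable def Matrix.PosSemidef.sqrt {n : Type*} [Fintype n] [DecidableEq n] {𝕜 : Type*}
    [RCLike 𝕜] {A : Matrix n n 𝕜} (hA : A.PosSemidef) : Matrix n n 𝕜 :=
  hA.1.eigenvectorUnitary.1 * diagonal ((↑) ∘ (Real.sqrt ∘ hA.1.eigenvalues)) *
  (star hA.1.eigenvectorUnitary : Matrix n n 𝕜)

noncomputable def traceNorm {n : Type*} [Fintype n] [DecidableEq n] (A : Matrix n n ℂ) : ℝ :=
  ((Matrix.posSemidef_conjTranspose_mul_self (R := ℂ) A).sqrt).trace.re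

/-- A symmetric `(N,M)`-POVM with parameter `x` on a `d`-dimensional Hilbert space. -/
def IsNMPOVM (d N M : ℕ) (x : ℝ) (E : Fin N → Fin M → Matrix (Fin d) (Fin d) ℂ) : Prop :=
  (∀ α k, (E α k).PosSemidef) ∧
  (∀ α, ∑ k, E α k = 1) ∧
  (∀ α k, (E α k).trace = (d : ℂ) / (M : ℂ)) ∧
  (∀ α k, (E α k * E α k).trace = (x : ℂ)) ∧
  (∀ α k l, k ≠ l →
    (E α k * E α l).trace = ((d : ℂ) - (M : ℂ) * (x : ℂ)) / ((M : ℂ) * ((M : ℂ) - 1))) ∧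
  (∀ α β k l, α ≠ β → (E α k * E β l).trace = (d : ℂ) / (M : ℂ) ^ 2)

/-- The swap (flip) operator `F` on `H ⊗ H`. -/
def swapOp (d : ℕ) : Matrix (Fin d × Fin d) (Fin d × Fin d) ℂ :=
  Matrix.of fun p q => if p.1 = q.2 ∧ p.2 = q.1 then 1 else 0

lemma povm_surj {d N M : ℕ} {x : ℝ} {E : Fin N → Fin M → Matrix (Fin d) (Fin d) ℂ}
    (hd : 2 < d) (hM : 2 ≤ M)
    (hPOVM : IsNMPOVM d N M x E)
    (hxlo : (d : ℝ) / (M : ℝ) ^ 2 < x)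
    (hIC : N * (M - 1) = d ^ 2 - 1) :
    ∀ X : Matrix (Fin d) (Fin d) ℂ, ∃ c : Fin N × Fin M → ℂ, ∑ p, c p • E p.1 p.2 = X := by
  obtain ⟨hpsd, hsum, htr, htr2, htrkl, htrab⟩ := hPOVM
  have hM0 : (0:ℕ) < M := by omega
  have h9 : 9 ≤ d ^ 2 := by nlinarith
  have hN0 : (0:ℕ) < N := by
    rcases Nat.eq_zero_or_pos N with h | h
    · subst h; simp at hIC; omega
    · exact h
  -- real facts
  have hMR : (0:ℝ) < (M:ℝ) := by exact_mod_cast hM0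
  have hMR1 : (0:ℝ) < (M:ℝ) - 1 := by
    have : (2:ℝ) ≤ (M:ℝ) := by exact_mod_cast hM
    linarith
  have hdR : (0:ℝ) < (d:ℝ) := by positivity
  have haR : (0:ℝ) < x * (M:ℝ)^2 - d := by
    have h2 : (d:ℝ) < x * (M:ℝ)^2 := by
      rw [div_lt_iff₀ (by positivity)] at hxlo
      linarith
    linarith
  -- complex constants
  set xC : ℂ := (x : ℂ) with hxC
  set dC : ℂ := (d : ℂ) with hdC
  set MC : ℂ := (M : ℂ) with hMCdef
  have hMC : MC ≠ 0 := by rw [hMCdef]; exact_mod_cast (by omega : M ≠ 0)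
  have hdCne : dC ≠ 0 := by rw [hdC]; exact_mod_cast (by omega : d ≠ 0)
  have hMC1 : MC - 1 ≠ 0 := by
    have h : MC - 1 = (((M:ℝ) - 1 : ℝ) : ℂ) := by rw [hMCdef]; push_cast; ring
    rw [h]
    exact Complex.ofReal_ne_zero.mpr hMR1.ne'
  set cB : ℂ := (dC - MC * xC) / (MC * (MC - 1)) with hcB
  set dM2 : ℂ := dC / MC ^ 2 with hdM2
  set aC : ℂ := xC - cB with haCdef
  have haC : aC ≠ 0 := by
    have h : aC = (((x * (M:ℝ)^2 - d) / ((M:ℝ) * ((M:ℝ) - 1)) : ℝ) : ℂ) := by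
      have hM1' : (M:ℂ) - 1 ≠ 0 := hMC1
      have hM0' : (M:ℂ) ≠ 0 := hMC
      rw [haCdef, hcB, hxC, hdC, hMCdef]
      push_cast
      field_simp
      ring
    rw [h]
    exact Complex.ofReal_ne_zero.mpr (by positivity)
  have hdM2ne : dM2 ≠ 0 := div_ne_zero hdCne (pow_ne_zero _ hMC)
  -- trace values
  have htrval : ∀ q p : Fin N × Fin M, (E q.1 q.2 * E p.1 p.2).trace
      = dM2 + (if p.1 = q.1 then cB - dM2 else 0) + (if p = q then aC else 0) := by
    intro q p
    by_cases h1 : p.1 = q.1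
    · by_cases h2 : p = q
      · subst h2
        rw [htr2]
        simp [haCdef]
      · have h2' : q.2 ≠ p.2 := by
          intro h
          exact h2 (Prod.ext h1 (h.symm))
        have : E q.1 q.2 * E p.1 p.2 = E q.1 q.2 * E q.1 p.2 := by rw [h1]
        rw [this, htrkl q.1 q.2 p.2 h2']
        simp [h1, h2, hcB]
    · have h2 : p ≠ q := fun h => h1 (by rw [h])
      rw [htrab q.1 p.1 q.2 p.2 (fun h => h1 h.symm)]
      simp [h1, h2, hdM2]
  -- Gram equation for kernel elements
  have hGram : ∀ c : Fin N × Fin M → ℂ, (∑ p, c p • E p.1 p.2) = 0 →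
      ∀ q : Fin N × Fin M,
        dM2 * (∑ p, c p) + (cB - dM2) * (∑ k, c (q.1, k)) + aC * c q = 0 := by
    intro c hc q
    have h0 : (E q.1 q.2 * ∑ p, c p • E p.1 p.2).trace = 0 := by rw [hc, Matrix.mul_zero, Matrix.trace_zero]
    rw [Matrix.mul_sum] at h0
    simp only [Matrix.mul_smul, Matrix.trace_sum, Matrix.trace_smul, smul_eq_mul] at h0
    have hsplit : ∑ p, c p * (E q.1 q.2 * E p.1 p.2).trace
        = dM2 * (∑ p, c p) + (cB - dM2) * (∑ k, c (q.1, k)) + aC * c q := by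
      simp only [htrval q, mul_add, Finset.sum_add_distrib]
      congr 1
      · congr 1
        · rw [Finset.mul_sum]; exact Finset.sum_congr rfl (fun p _ => mul_comm _ _)
        · rw [Fintype.sum_prod_type]
          have hinner : ∀ α : Fin N, ∑ k, c (α, k) * (if α = q.1 then cB - dM2 else 0)
              = if α = q.1 then (cB - dM2) * ∑ k, c (α, k) else 0 := by
            intro α; split <;> simp [Finset.mul_sum, mul_comm]
          calc ∑ α, ∑ k, c (α, k) * (if (α, k).1 = q.1 then cB - dM2 else 0)
              = ∑ α, if α = q.1 then (cB - dM2) * ∑ k, c (α, k) else 0 := by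
                exact Finset.sum_congr rfl (fun α _ => hinner α)
            _ = (cB - dM2) * ∑ k, c (q.1, k) := by rw [Finset.sum_ite_eq' Finset.univ q.1]; simp
      · simp [mul_ite, Finset.sum_ite_eq' Finset.univ q, mul_comm]
    rw [hsplit] at h0
    exact h0
  have hconst : ∀ c : Fin N × Fin M → ℂ, (∑ p, c p • E p.1 p.2) = 0 →
      ∀ (α : Fin N) (k k' : Fin M), c (α, k) = c (α, k') := by
    intro c hc α k k'
    have h1 := hGram c hc (α, k)
    have h2 := hGram c hc (α, k')
    have h3 : aC * c (α, k) = aC * c (α, k') := by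
      simp only at h1 h2
      linear_combination h1 - h2
    exact mul_left_cancel₀ haC h3
  have hcoef : (cB - dM2) * MC + aC = 0 := by
    rw [haCdef, hcB, hdM2]
    field_simp [hMC, hMC1]
    ring
  have hsumzero : ∀ c : Fin N × Fin M → ℂ, (∑ p, c p • E p.1 p.2) = 0 →
      ∑ α, c (α, (⟨0, hM0⟩ : Fin M)) = 0 := by
    intro c hc
    set k0 : Fin M := ⟨0, hM0⟩
    have hblock : ∀ α : Fin N, ∑ k, c (α, k) = MC * c (α, k0) := by
      intro α
      calc ∑ k, c (α, k) = ∑ _k : Fin M, c (α, k0) :=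
            Finset.sum_congr rfl (fun k _ => hconst c hc α k k0)
        _ = MC * c (α, k0) := by
            simp [Finset.sum_const, hMCdef, mul_comm]
    have hs : (∑ p : Fin N × Fin M, c p) = MC * ∑ α, c (α, k0) := by
      rw [Fintype.sum_prod_type, Finset.mul_sum]
      exact Finset.sum_congr rfl (fun α _ => hblock α)
    have hα0 := hGram c hc (⟨0, hN0⟩, k0)
    simp only at hα0
    rw [hblock, hs] at hα0
    -- hα0 : dM2 * (MC * S) + (cB - dM2) * (MC * c (α0,k0)) + aC * c (α0,k0) = 0
    have hz : dM2 * (MC * ∑ α, c (α, k0)) = 0 := by linear_combination hα0 - c (⟨0, hN0⟩, k0) * hcoef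
    rcases mul_eq_zero.mp hz with h | h
    · exact absurd h hdM2ne
    · rcases mul_eq_zero.mp h with h' | h'
      · exact absurd h' hMC
      · exact h'
  -- linear algebra
  set k0 : Fin M := ⟨0, hM0⟩
  let φ : (Fin N × Fin M → ℂ) →ₗ[ℂ] Matrix (Fin d) (Fin d) ℂ :=
    { toFun := fun c => ∑ p, c p • E p.1 p.2
      map_add' := by intro a b; simp [add_smul, Finset.sum_add_distrib]
      map_smul' := by intro r a; simp [smul_smul, Finset.smul_sum]
    }
  let T : (Fin N → ℂ) →ₗ[ℂ] ℂ :=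
    { toFun := fun g => ∑ α, g α
      map_add' := by intro a b; simp [Finset.sum_add_distrib]
      map_smul' := by intro r a; simp [Finset.mul_sum]
    }
  have hTsurj : Function.Surjective T := by
    intro z
    refine ⟨Pi.single (⟨0, hN0⟩ : Fin N) z, ?_⟩
    simp [T, Finset.sum_pi_single']
  have hrangeT : LinearMap.range T = ⊤ := LinearMap.range_eq_top.mpr hTsurj
  have hkerT : Module.finrank ℂ (LinearMap.ker T) = N - 1 := by
    have h := LinearMap.finrank_range_add_finrank_ker T
    rw [hrangeT] at h
    simp [Module.finrank_fintype_fun_eq_card] at h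
    omega
  let ψ : (Fin N × Fin M → ℂ) →ₗ[ℂ] (Fin N → ℂ) :=
    LinearMap.funLeft ℂ ℂ (fun α : Fin N => (α, k0))
  have hmem : ∀ c : LinearMap.ker φ, ψ c.1 ∈ LinearMap.ker T := by
    intro c
    have := hsumzero c.1 c.2
    simpa [T, ψ, LinearMap.funLeft] using this
  let θ : LinearMap.ker φ →ₗ[ℂ] LinearMap.ker T :=
    LinearMap.codRestrict (LinearMap.ker T) (ψ.comp (LinearMap.ker φ).subtype) hmem
  have hθinj : Function.Injective θ := by
    intro c1 c2 h
    apply Subtype.ext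
    funext p
    have h1 : c1.1 (p.1, k0) = c2.1 (p.1, k0) := by
      have := congrArg (fun (g : LinearMap.ker T) => g.1 p.1) h
      simpa [θ, ψ, LinearMap.funLeft] using this
    calc c1.1 p = c1.1 (p.1, k0) := by
          rw [show p = (p.1, p.2) from rfl]; exact hconst c1.1 c1.2 p.1 p.2 k0
      _ = c2.1 (p.1, k0) := h1
      _ = c2.1 p := by
          rw [show p = (p.1, p.2) from rfl]; exact (hconst c2.1 c2.2 p.1 p.2 k0).symm
  have hkerφ : Module.finrank ℂ (LinearMap.ker φ) ≤ N - 1 := by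
    rw [← hkerT]
    exact LinearMap.finrank_le_finrank_of_injective hθinj
  have hrn := LinearMap.finrank_range_add_finrank_ker φ
  rw [Module.finrank_fintype_fun_eq_card] at hrn
  have hcard : Fintype.card (Fin N × Fin M) = N * M := by simp
  rw [hcard] at hrn
  have hmat : Module.finrank ℂ (Matrix (Fin d) (Fin d) ℂ) = d * d := by
    rw [Module.finrank_matrix]
    simp
  have hle : Module.finrank ℂ (LinearMap.range φ) ≤ d * d := by
    rw [← hmat]
    exact Submodule.finrank_le _
  have h4 : N * (M - 1) + 1 = d * d := by
    rw [hIC, Nat.sub_add_cancel (by omega), pow_two]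
  have h5 : N * M = N * (M - 1) + N := by
    conv_lhs => rw [show M = (M - 1) + 1 by omega]
    ring
  have htopfr : Module.finrank ℂ (LinearMap.range φ) = d * d := by
    have hk : Module.finrank ℂ (LinearMap.ker φ) + 1 ≤ N := by omega
    linarith
  have htop : LinearMap.range φ = ⊤ := by
    apply Submodule.eq_top_of_finrank_eq
    rw [htopfr, hmat]
  intro X
  have hX : X ∈ LinearMap.range φ := by rw [htop]; trivial
  obtain ⟨c, hc⟩ := hX
  exact ⟨c, hc⟩

lemma povm_key {d N M : ℕ} {x : ℝ} {E : Fin N → Fin M → Matrix (Fin d) (Fin d) ℂ}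
    (hd : 2 < d) (hM : 2 ≤ M)
    (hPOVM : IsNMPOVM d N M x E)
    (hxlo : (d : ℝ) / (M : ℝ) ^ 2 < x)
    (hIC : N * (M - 1) = d ^ 2 - 1) :
    ∀ X : Matrix (Fin d) (Fin d) ℂ,
      ∑ p : Fin N × Fin M, (E p.1 p.2 * X).trace • E p.1 p.2
        = (((x:ℂ) * (M:ℂ)^2 - (d:ℂ)) / ((M:ℂ) * ((M:ℂ) - 1))) • X
          + ((((d:ℂ)^3 - (x:ℂ) * (M:ℂ)^2) / ((d:ℂ) * (M:ℂ) * ((M:ℂ) - 1))) * X.trace) • 1 := by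
  obtain ⟨hpsd, hsum, htr, htr2, htrkl, htrab⟩ := hPOVM
  have hM0 : (0:ℕ) < M := by omega
  have h9 : 9 ≤ d ^ 2 := by nlinarith
  have hN0 : (0:ℕ) < N := by
    rcases Nat.eq_zero_or_pos N with h | h
    · subst h; simp at hIC; omega
    · exact h
  have hMR1 : (0:ℝ) < (M:ℝ) - 1 := by
    have : (2:ℝ) ≤ (M:ℝ) := by exact_mod_cast hM
    linarith
  have hMC : (M:ℂ) ≠ 0 := by exact_mod_cast (by omega : M ≠ 0)
  have hdCne : (d:ℂ) ≠ 0 := by exact_mod_cast (by omega : d ≠ 0)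
  have hMC1 : (M:ℂ) - 1 ≠ 0 := by
    have h : (M:ℂ) - 1 = (((M:ℝ) - 1 : ℝ) : ℂ) := by push_cast; ring
    rw [h]
    exact Complex.ofReal_ne_zero.mpr hMR1.ne'
  have hNC : (N:ℂ) * ((M:ℂ) - 1) = (d:ℂ)^2 - 1 := by
    have h1 : ((N * (M - 1) : ℕ) : ℂ) = ((d ^ 2 - 1 : ℕ) : ℂ) := by rw [hIC]
    rwa [Nat.cast_mul, Nat.cast_sub (by omega : 1 ≤ M), Nat.cast_sub (by omega : 1 ≤ d ^ 2),
      Nat.cast_pow, Nat.cast_one] at h1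
  set xC : ℂ := (x : ℂ) with hxC
  set cB : ℂ := ((d:ℂ) - (M:ℂ) * xC) / ((M:ℂ) * ((M:ℂ) - 1)) with hcB
  set dM2 : ℂ := (d:ℂ) / (M:ℂ) ^ 2 with hdM2
  set aC : ℂ := xC - cB with haCdef
  set bC : ℂ := ((d:ℂ)^3 - xC * (M:ℂ)^2) / ((d:ℂ) * (M:ℂ) * ((M:ℂ) - 1)) with hbC
  have htrval : ∀ q p : Fin N × Fin M, (E q.1 q.2 * E p.1 p.2).trace
      = dM2 + (if p.1 = q.1 then cB - dM2 else 0) + (if p = q then aC else 0) := by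
    intro q p
    by_cases h1 : p.1 = q.1
    · by_cases h2 : p = q
      · subst h2
        rw [htr2]
        simp [haCdef]
      · have h2' : q.2 ≠ p.2 := by
          intro h
          exact h2 (Prod.ext h1 (h.symm))
        have h3 : E q.1 q.2 * E p.1 p.2 = E q.1 q.2 * E q.1 p.2 := by rw [h1]
        rw [h3, htrkl q.1 q.2 p.2 h2']
        simp [h1, h2, hcB]
    · have h2 : p ≠ q := fun h => h1 (by rw [h])
      rw [htrab q.1 p.1 q.2 p.2 (fun h => h1 h.symm)]
      simp [h1, h2, hdM2]
  -- per generator computation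
  have hgen : ∀ q : Fin N × Fin M,
      ∑ p : Fin N × Fin M, (E p.1 p.2 * E q.1 q.2).trace • E p.1 p.2
        = aC • E q.1 q.2 + ((N:ℂ) * dM2 + (cB - dM2)) • 1 := by
    intro q
    have hone : ∑ p : Fin N × Fin M, E p.1 p.2 = (N:ℂ) • (1 : Matrix (Fin d) (Fin d) ℂ) := by
      rw [Fintype.sum_prod_type]
      simp only [hsum]
      rw [Finset.sum_const, Finset.card_univ, Fintype.card_fin, ← Nat.cast_smul_eq_nsmul ℂ]
    calc ∑ p : Fin N × Fin M, (E p.1 p.2 * E q.1 q.2).trace • E p.1 p.2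
        = ∑ p : Fin N × Fin M, (dM2 • E p.1 p.2
            + ((if p.1 = q.1 then cB - dM2 else 0) • E p.1 p.2
              + (if p = q then aC else 0) • E p.1 p.2)) := by
          refine Finset.sum_congr rfl (fun p _ => ?_)
          rw [Matrix.trace_mul_comm, htrval q p, add_smul, add_smul, add_assoc]
      _ = dM2 • ((N:ℂ) • (1 : Matrix (Fin d) (Fin d) ℂ))
            + ((cB - dM2) • (1 : Matrix (Fin d) (Fin d) ℂ) + aC • E q.1 q.2) := by
          rw [Finset.sum_add_distrib, Finset.sum_add_distrib, ← Finset.smul_sum, hone]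
          congr 1
          congr 1
          · rw [Fintype.sum_prod_type]
            have hinner : ∀ α : Fin N, ∑ k : Fin M, (if α = q.1 then cB - dM2 else 0) • E α k
                = if α = q.1 then (cB - dM2) • (1 : Matrix (Fin d) (Fin d) ℂ) else 0 := by
              intro α
              split <;> simp [← Finset.smul_sum, hsum]
            calc ∑ α, ∑ k, (if (α, k).1 = q.1 then cB - dM2 else 0) • E α k
                = ∑ α, if α = q.1 then (cB - dM2) • (1 : Matrix (Fin d) (Fin d) ℂ) else 0 :=
                  Finset.sum_congr rfl (fun α _ => hinner α)
              _ = (cB - dM2) • (1 : Matrix (Fin d) (Fin d) ℂ) := by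
                  rw [Finset.sum_ite_eq' Finset.univ q.1]; simp
          · simp [ite_smul, Finset.sum_ite_eq' Finset.univ q]
      _ = aC • E q.1 q.2 + ((N:ℂ) * dM2 + (cB - dM2)) • 1 := by
          rw [smul_smul, add_smul, mul_comm dM2 ((N:ℂ))]
          abel
  -- scalar identities
  have hsca : aC = (xC * (M:ℂ)^2 - (d:ℂ)) / ((M:ℂ) * ((M:ℂ) - 1)) := by
    rw [haCdef, hcB]
    field_simp
    ring
  have hN' : (N:ℂ) = ((d:ℂ)^2 - 1) / ((M:ℂ) - 1) := by
    field_simp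
    linear_combination hNC
  have hscb : (N:ℂ) * dM2 + (cB - dM2) = bC * ((d:ℂ) / (M:ℂ)) := by
    rw [hdM2, hcB, hbC, hN']
    field_simp
    ring
  intro X
  obtain ⟨c, rfl⟩ := povm_surj hd hM ⟨hpsd, hsum, htr, htr2, htrkl, htrab⟩ hxlo hIC X
  rw [← hsca]
  calc ∑ p : Fin N × Fin M, (E p.1 p.2 * ∑ q : Fin N × Fin M, c q • E q.1 q.2).trace • E p.1 p.2
      = ∑ q : Fin N × Fin M, c q • ∑ p : Fin N × Fin M, (E p.1 p.2 * E q.1 q.2).trace • E p.1 p.2 := by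
        simp only [Matrix.mul_sum, Matrix.mul_smul, Matrix.trace_sum, Matrix.trace_smul,
          smul_eq_mul, Finset.sum_smul, Finset.smul_sum]
        rw [Finset.sum_comm]
        refine Finset.sum_congr rfl fun p _ => Finset.sum_congr rfl fun q _ => ?_
        rw [smul_smul]
    _ = ∑ q : Fin N × Fin M, c q • (aC • E q.1 q.2 + ((N:ℂ) * dM2 + (cB - dM2)) • 1) := by
        exact Finset.sum_congr rfl fun q _ => by rw [hgen q]
    _ = aC • (∑ q : Fin N × Fin M, c q • E q.1 q.2)
        + (bC * (∑ q : Fin N × Fin M, c q • E q.1 q.2).trace) • 1 := by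
        simp only [smul_add, Finset.sum_add_distrib, smul_smul]
        congr 1
        · rw [Finset.smul_sum]
          exact Finset.sum_congr rfl fun q _ => by rw [smul_smul, mul_comm]
        · rw [Matrix.trace_sum]
          simp only [Matrix.trace_smul, smul_eq_mul, htr, hscb]
          rw [Finset.mul_sum, Finset.sum_smul]
          exact Finset.sum_congr rfl fun q _ => by congr 1; ring

theorem gram_of_povm_vectors (d N M : ℕ) (x : ℝ)
    (E : Fin N → Fin M → Matrix (Fin d) (Fin d) ℂ)
    (hd : 2 < d) (hM : 2 ≤ M)
    (hPOVM : IsNMPOVM d N M x E)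
    (hx : (d : ℝ) / (M : ℝ) ^ 2 < x ∧
      x ≤ min ((d : ℝ) ^ 2 / (M : ℝ) ^ 2) ((d : ℝ) / (M : ℝ)))
    (hIC : N * (M - 1) = d ^ 2 - 1)
    (e : Fin d → Fin d → ℂ)
    (he : ∀ i j, star (e i) ⬝ᵥ e j = if i = j then 1 else 0)
    (u : Fin d → Fin d → (Fin N × Fin M → ℂ))
    (hu : ∀ i j p, u i j p = star (e j) ⬝ᵥ ((E p.1 p.2) *ᵥ e i)) :
    ∀ i j i' j', star (u i j) ⬝ᵥ u i' j'
      = (((x * (M : ℝ) ^ 2 - (d : ℝ)) / ((M : ℝ) * ((M : ℝ) - 1)) : ℝ) : ℂ) *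
          (if i = i' ∧ j = j' then 1 else 0)
        + ((((d : ℝ) ^ 3 - x * (M : ℝ) ^ 2) / ((d : ℝ) * (M : ℝ) * ((M : ℝ) - 1)) : ℝ) : ℂ) *
          (if i = j ∧ i' = j' then 1 else 0) := by
  intro i j i' j'
  have hherm : ∀ (a : Fin N) (k : Fin M), (E a k).conjTranspose = E a k := fun a k => (hPOVM.1 a k).1
  set X : Matrix (Fin d) (Fin d) ℂ := Matrix.vecMulVec (e j) (star (e i)) with hX
  have htrX : ∀ A : Matrix (Fin d) (Fin d) ℂ, (A * X).trace = star (e i) ⬝ᵥ (A *ᵥ e j) := by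
    intro A
    simp only [hX, Matrix.trace, Matrix.diag_apply, Matrix.mul_apply, Matrix.vecMulVec_apply,
      dotProduct, Matrix.mulVec, Pi.star_apply, Finset.mul_sum]
    exact Finset.sum_congr rfl fun a _ => Finset.sum_congr rfl fun b _ => by ring
  have hE : ∀ (p : Fin N × Fin M) a b, star (E p.1 p.2 a b) = E p.1 p.2 b a := by
    intro p a b
    conv_rhs => rw [← hherm p.1 p.2]
    simp [Matrix.conjTranspose_apply]
  have hconjU : ∀ p : Fin N × Fin M, star (u i j p) = (E p.1 p.2 * X).trace := by
    intro p
    rw [htrX, hu]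
    simp only [dotProduct, Matrix.mulVec, Pi.star_apply, star_sum, star_mul', star_star,
      Finset.mul_sum]
    rw [Finset.sum_comm]
    refine Finset.sum_congr rfl fun a _ => Finset.sum_congr rfl fun b _ => ?_
    rw [hE]
    ring
  have hXtr : X.trace = star (e i) ⬝ᵥ e j := by
    have h := htrX 1
    rwa [Matrix.one_mul, Matrix.one_mulVec] at h
  have hfX : star (e j') ⬝ᵥ (X *ᵥ e i') = (star (e i) ⬝ᵥ e i') * (star (e j') ⬝ᵥ e j) := by
    simp only [hX, dotProduct, Matrix.mulVec, Matrix.vecMulVec_apply, Pi.star_apply,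
      Finset.mul_sum, Finset.sum_mul]
    exact Finset.sum_congr rfl fun a _ => Finset.sum_congr rfl fun b _ => by ring
  have hkey := povm_key hd hM hPOVM hx.1 hIC X
  have hstep2 : ∀ (t : Fin N × Fin M → ℂ),
      star (e j') ⬝ᵥ ((∑ p : Fin N × Fin M, t p • E p.1 p.2) *ᵥ e i')
        = ∑ p : Fin N × Fin M, t p * (star (e j') ⬝ᵥ (E p.1 p.2 *ᵥ e i')) := by
    intro t
    have h1 := map_sum (AddMonoidHom.mk' (fun A : Matrix (Fin d) (Fin d) ℂ => A *ᵥ e i')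
      (fun A B => Matrix.add_mulVec A B (e i'))) (fun p : Fin N × Fin M => t p • E p.1 p.2)
      Finset.univ
    simp only [AddMonoidHom.mk'_apply] at h1
    rw [h1]
    have h2 := map_sum (AddMonoidHom.mk' (fun v : Fin d → ℂ => star (e j') ⬝ᵥ v)
      (fun v w => dotProduct_add (star (e j')) v w))
      (fun p : Fin N × Fin M => (t p • E p.1 p.2) *ᵥ e i') Finset.univ
    simp only [AddMonoidHom.mk'_apply] at h2
    rw [h2]
    refine Finset.sum_congr rfl fun p _ => ?_
    rw [Matrix.smul_mulVec, dotProduct_smul, smul_eq_mul]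
  have hstep1 : star (u i j) ⬝ᵥ u i' j'
      = ∑ p : Fin N × Fin M, (E p.1 p.2 * X).trace * (star (e j') ⬝ᵥ (E p.1 p.2 *ᵥ e i')) := by
    simp only [dotProduct, Pi.star_apply]
    refine Finset.sum_congr rfl fun p _ => ?_
    rw [hconjU p, hu i' j' p]
    rfl
  have hAR : (((x * (M : ℝ) ^ 2 - (d : ℝ)) / ((M : ℝ) * ((M : ℝ) - 1)) : ℝ) : ℂ)
      = ((x:ℂ) * (M:ℂ)^2 - (d:ℂ)) / ((M:ℂ) * ((M:ℂ) - 1)) := by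
    push_cast
    ring
  have hBR : ((((d : ℝ) ^ 3 - x * (M : ℝ) ^ 2) / ((d : ℝ) * (M : ℝ) * ((M : ℝ) - 1)) : ℝ) : ℂ)
      = ((d:ℂ)^3 - (x:ℂ) * (M:ℂ)^2) / ((d:ℂ) * (M:ℂ) * ((M:ℂ) - 1)) := by
    push_cast
    ring
  calc star (u i j) ⬝ᵥ u i' j'
      = star (e j') ⬝ᵥ ((∑ p : Fin N × Fin M, (E p.1 p.2 * X).trace • E p.1 p.2) *ᵥ e i') := by
        rw [hstep1, hstep2]
    _ = star (e j') ⬝ᵥ (((((x:ℂ) * (M:ℂ)^2 - (d:ℂ)) / ((M:ℂ) * ((M:ℂ) - 1))) • X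
          + ((((d:ℂ)^3 - (x:ℂ) * (M:ℂ)^2) / ((d:ℂ) * (M:ℂ) * ((M:ℂ) - 1))) * X.trace) • 1) *ᵥ e i') := by
        rw [hkey]
    _ = (((x:ℂ) * (M:ℂ)^2 - (d:ℂ)) / ((M:ℂ) * ((M:ℂ) - 1))) * (star (e j') ⬝ᵥ (X *ᵥ e i'))
        + ((((d:ℂ)^3 - (x:ℂ) * (M:ℂ)^2) / ((d:ℂ) * (M:ℂ) * ((M:ℂ) - 1))) * X.trace)
            * (star (e j') ⬝ᵥ e i') := by
        rw [Matrix.add_mulVec, Matrix.smul_mulVec, Matrix.smul_mulVec,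
          Matrix.one_mulVec, dotProduct_add, dotProduct_smul, dotProduct_smul, smul_eq_mul,
          smul_eq_mul]
    _ = (((x * (M : ℝ) ^ 2 - (d : ℝ)) / ((M : ℝ) * ((M : ℝ) - 1)) : ℝ) : ℂ) *
          (if i = i' ∧ j = j' then 1 else 0)
        + ((((d : ℝ) ^ 3 - x * (M : ℝ) ^ 2) / ((d : ℝ) * (M : ℝ) * ((M : ℝ) - 1)) : ℝ) : ℂ) *
          (if i = j ∧ i' = j' then 1 else 0) := by
        rw [hfX, hXtr, hAR, hBR, he i i', he j' j, he i j, he j' i']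
        have e1 : (if j' = j then (1:ℂ) else 0) = (if j = j' then 1 else 0) := by
          simp [eq_comm]
        have e2 : (if j' = i' then (1:ℂ) else 0) = (if i' = j' then 1 else 0) := by
          simp [eq_comm]
        rw [e1, e2]
        by_cases h1 : i = i' <;> by_cases h2 : j = j' <;> by_cases h3 : i = j <;>
          by_cases h4 : i' = j' <;> simp [h1, h2, h3, h4] <;> ring
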